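/- arXiv:1703.00436 — 4 statements merged into one kernel-verified Lean document; each statement's English description precedes it below -/
import Mathlib

section
/- Suppose for a vector field ψ ∈ H¹(T)² on a domain T ⊂ ℝ², the Korn-type inequality inf_{α∈ℝ} ‖∇ψ - α J‖_{L²(T)} ≤ C ‖ε(ψ)‖_{L²(T)} holds, where J = [[0,1],[-1,0]] and ε(ψ) is the symmetric gradient. Then for the rotated gradient τ = ∇⊥ψ (with ∇⊥ψ having rows (∂₂ψ₁, -∂₁ψ₁) and (∂₂ψ₂, -∂₁ψ₂)) one has inf_{α∈ℝ} ‖τ - α I‖_{L²(T)} ≤ C ‖dev τ‖_{L²(T)}, and conversely. Hence the optimal constants in the local Korn inequality and the local dev-div inequality on T coincide. -/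
/-! The rotation `rotm` permutes the entries of a matrix up to sign, so it preserves `frob`; it
sends `Jm` to `1` and intertwines `symMat` with `devm`. Hence the two inequalities have literally
the same integrands. -/

open Matrix BigOperators MeasureTheory RealInnerProductSpace

noncomputable def frob (τ : Matrix (Fin 2) (Fin 2) ℝ) : ℝ :=
  Real.sqrt (∑ i, ∑ j, (τ i j) ^ 2)

noncomputable def finner (A B : Matrix (Fin 2) (Fin 2) ℝ) : ℝ :=
  ∑ i, ∑ j, A i j * B i j

noncomputable def asym (τ : Matrix (Fin 2) (Fin 2) ℝ) : Matrix (Fin 2) (Fin 2) ℝ :=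
  (1 / 2 : ℝ) • (τ - τᵀ)

noncomputable def symMat (τ : Matrix (Fin 2) (Fin 2) ℝ) : Matrix (Fin 2) (Fin 2) ℝ :=
  (1 / 2 : ℝ) • (τ + τᵀ)

noncomputable def devm (τ : Matrix (Fin 2) (Fin 2) ℝ) : Matrix (Fin 2) (Fin 2) ℝ :=
  τ - (τ.trace / 2) • (1 : Matrix (Fin 2) (Fin 2) ℝ)

noncomputable def Acomp (μ lam : ℝ) (τ : Matrix (Fin 2) (Fin 2) ℝ) :
    Matrix (Fin 2) (Fin 2) ℝ :=
  (1 / (2 * μ)) • (τ - (lam / (2 * (μ + lam)) * τ.trace) • (1 : Matrix (Fin 2) (Fin 2) ℝ))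

noncomputable def Jm : Matrix (Fin 2) (Fin 2) ℝ := !![0, 1; -1, 0]

noncomputable def rotm (G : Matrix (Fin 2) (Fin 2) ℝ) : Matrix (Fin 2) (Fin 2) ℝ :=
  Matrix.of fun i j => if j = 0 then G i 1 else -(G i 0)

lemma frob_rotm (G : Matrix (Fin 2) (Fin 2) ℝ) : frob (rotm G) = frob G := by
  simp [frob, rotm, Fin.sum_univ_two, add_comm]

lemma rotm_eq_mul_transpose_Jm (G : Matrix (Fin 2) (Fin 2) ℝ) : rotm G = G * Jmᵀ := by
  ext i j
  fin_cases j <;> simp [rotm, Jm, mul_apply, Fin.sum_univ_two]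

lemma Jm_mul_transpose_Jm : Jm * Jmᵀ = 1 := by
  ext i j
  fin_cases i <;> fin_cases j <;> simp [Jm, mul_apply, Fin.sum_univ_two]

lemma rotm_sub_smul_one (G : Matrix (Fin 2) (Fin 2) ℝ) (α : ℝ) :
    rotm G - α • (1 : Matrix (Fin 2) (Fin 2) ℝ) = rotm (G - α • Jm) := by
  rw [rotm_eq_mul_transpose_Jm, rotm_eq_mul_transpose_Jm, sub_mul, smul_mul_assoc,
    Jm_mul_transpose_Jm]

lemma devm_rotm (G : Matrix (Fin 2) (Fin 2) ℝ) : devm (rotm G) = rotm (symMat G) := by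
  ext i j
  fin_cases i <;> fin_cases j <;> simp [devm, rotm, symMat, trace, Fin.sum_univ_two] <;> ring

/-- the local Korn inequality for ∇ψ (with constant C) holds iff the local
    dev-div inequality holds for the rotated gradient τ = ∇⊥ψ with the same constant C;
    in particular the optimal constants coincide. L² norms over the domain T are taken
    with respect to the underlying measure. -/
theorem korn_iff_devdiv {T : Type*} [MeasureSpace T]
    (ψgrad : T → Matrix (Fin 2) (Fin 2) ℝ) (C : ℝ) :
    ((⨅ α : ℝ, Real.sqrt (∫ x, (frob (ψgrad x - α • Jm)) ^ 2)) ≤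
        C * Real.sqrt (∫ x, (frob (symMat (ψgrad x))) ^ 2)) ↔
    ((⨅ α : ℝ,
        Real.sqrt (∫ x, (frob (rotm (ψgrad x) - α • (1 : Matrix (Fin 2) (Fin 2) ℝ))) ^ 2)) ≤
        C * Real.sqrt (∫ x, (frob (devm (rotm (ψgrad x)))) ^ 2)) := by
  simp_rw [rotm_sub_smul_one, devm_rotm, frob_rotm]
end

section
/- Let Ω ⊂ ℝ² be a bounded Lipschitz domain, μ > 0, λ > 0, and let (u,p), (ũ,p̃) ∈ H¹_{Γ_D}(Ω)² × L²(Ω) solve the displacement-pressure elasticity system with data (f, g) and (P f, P g) respectively, where P and P^{Γ_N} are L²-orthogonal projections. Then 2μ‖ε(ũ - u)‖² + (1/λ)‖p̃ - p‖² = (P f - f, ũ - u - P(ũ - u)) + ⟨P^{Γ_N} g - g, ũ - u - P^{Γ_N}(ũ - u)⟩_{L²(Γ_N)}. -/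
open RealInnerProductSpace

/-! Testing the difference of the two weak formulations with the difference of the solutions
gives `2μ‖ε(ũ - u)‖² + (1/λ)‖p̃ - p‖²` on the left and the data differences paired with
`ũ - u` on the right. Since `P f - f` is orthogonal to the range of `P`, the projected part of
`ũ - u` may be subtracted from that pairing for free, and likewise on `Γ_N`. -/

/-- `(u, p)` solves the displacement-pressure system with volume data `f` and traction `g`. -/
structure IsDisplacementPressureSolution {V W Q L G : Type*} [AddCommGroup V] [Module ℝ V]
    [NormedAddCommGroup W] [InnerProductSpace ℝ W]
    [NormedAddCommGroup Q] [InnerProductSpace ℝ Q]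
    [NormedAddCommGroup L] [InnerProductSpace ℝ L]
    [NormedAddCommGroup G] [InnerProductSpace ℝ G]
    (μ lam : ℝ) (eps : V →ₗ[ℝ] W) (dv : V →ₗ[ℝ] Q) (j : V →ₗ[ℝ] L) (γ : V →ₗ[ℝ] G)
    (f : L) (g : G) (u : V) (p : Q) : Prop where
  momentum : ∀ v : V, 2 * μ * ⟪eps u, eps v⟫ + ⟪p, dv v⟫ = ⟪f, j v⟫ + ⟪g, γ v⟫
  constitutive : ∀ q : Q, ⟪dv u, q⟫ - (1 / lam) * ⟪p, q⟫ = 0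

namespace IsDisplacementPressureSolution

variable {V W Q L G : Type*} [AddCommGroup V] [Module ℝ V]
    [NormedAddCommGroup W] [InnerProductSpace ℝ W]
    [NormedAddCommGroup Q] [InnerProductSpace ℝ Q]
    [NormedAddCommGroup L] [InnerProductSpace ℝ L]
    [NormedAddCommGroup G] [InnerProductSpace ℝ G]
    {μ lam : ℝ} {eps : V →ₗ[ℝ] W} {dv : V →ₗ[ℝ] Q} {j : V →ₗ[ℝ] L} {γ : V →ₗ[ℝ] G}

theorem sub {f f' : L} {g g' : G} {u u' : V} {p p' : Q}
    (h' : IsDisplacementPressureSolution μ lam eps dv j γ f' g' u' p')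
    (h : IsDisplacementPressureSolution μ lam eps dv j γ f g u p) :
    IsDisplacementPressureSolution μ lam eps dv j γ (f' - f) (g' - g) (u' - u) (p' - p) where
  momentum v := by
    have := h'.momentum v
    have := h.momentum v
    simp only [map_sub, inner_sub_left]
    linarith
  constitutive q := by
    have := h'.constitutive q
    have := h.constitutive q
    simp only [map_sub, inner_sub_left]
    linarith

theorem energy_eq {f : L} {g : G} {u : V} {p : Q}
    (h : IsDisplacementPressureSolution μ lam eps dv j γ f g u p) :
    2 * μ * ‖eps u‖ ^ 2 + (1 / lam) * ‖p‖ ^ 2 = ⟪f, j u⟫ + ⟪g, γ u⟫ := by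
  have hmom := h.momentum u
  have hcon := h.constitutive p
  rw [real_inner_comm, real_inner_self_eq_norm_sq] at hcon
  rw [real_inner_self_eq_norm_sq] at hmom
  linarith

end IsDisplacementPressureSolution

theorem inner_sub_self_sub_apply_of_orthogonal {E : Type*} [NormedAddCommGroup E]
    [InnerProductSpace ℝ E] {P : E → E} (hP : ∀ x y : E, ⟪P x - x, P y⟫ = 0) (x y : E) :
    ⟪P x - x, y - P y⟫ = ⟪P x - x, y⟫ := by
  rw [inner_sub_right, hP, sub_zero]

/-- `eps`, `dv`, `j`, `γ` are the strain, divergence, L²-embedding and boundary trace operators;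
`P`, `PG` are the L²-orthogonal projections, characterized by `⟪P x - x, P y⟫ = 0`. -/
theorem oscillation_identity_general
    {V W Q L G : Type*} [AddCommGroup V] [Module ℝ V]
    [NormedAddCommGroup W] [InnerProductSpace ℝ W]
    [NormedAddCommGroup Q] [InnerProductSpace ℝ Q]
    [NormedAddCommGroup L] [InnerProductSpace ℝ L]
    [NormedAddCommGroup G] [InnerProductSpace ℝ G]
    (μ lam : ℝ)
    (eps : V →ₗ[ℝ] W) (dv : V →ₗ[ℝ] Q) (j : V →ₗ[ℝ] L) (γ : V →ₗ[ℝ] G)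
    (P : L →ₗ[ℝ] L) (PG : G →ₗ[ℝ] G)
    (hP : ∀ x y : L, ⟪P x - x, P y⟫ = 0)
    (hPG : ∀ x y : G, ⟪PG x - x, PG y⟫ = 0)
    (f : L) (g : G) (u ut : V) (p pt : Q)
    (h1 : ∀ v : V, 2 * μ * ⟪eps u, eps v⟫ + ⟪p, dv v⟫ = ⟪f, j v⟫ + ⟪g, γ v⟫)
    (h2 : ∀ q : Q, ⟪dv u, q⟫ - (1 / lam) * ⟪p, q⟫ = 0)
    (h1t : ∀ v : V, 2 * μ * ⟪eps ut, eps v⟫ + ⟪pt, dv v⟫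
      = ⟪P f, j v⟫ + ⟪PG g, γ v⟫)
    (h2t : ∀ q : Q, ⟪dv ut, q⟫ - (1 / lam) * ⟪pt, q⟫ = 0) :
    2 * μ * ‖eps (ut - u)‖ ^ 2 + (1 / lam) * ‖pt - p‖ ^ 2 =
      ⟪P f - f, j (ut - u) - P (j (ut - u))⟫ +
      ⟪PG g - g, γ (ut - u) - PG (γ (ut - u))⟫ := by
  have hsol : IsDisplacementPressureSolution μ lam eps dv j γ f g u p := ⟨h1, h2⟩
  have hsolt : IsDisplacementPressureSolution μ lam eps dv j γ (P f) (PG g) ut pt := ⟨h1t, h2t⟩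
  rw [(hsolt.sub hsol).energy_eq, inner_sub_self_sub_apply_of_orthogonal hP,
    inner_sub_self_sub_apply_of_orthogonal hPG]

/-- oscillation identity for the displacement-pressure system. Here `eps`,
    `dv`, `j`, `γ` are the (linear) strain, divergence, L²-embedding and boundary trace
    operators, `P`, `PG` are L²-orthogonal projections (characterized by
    (Px - x, Py) = 0), and (u, p), (ũ, p̃) solve the weak formulation with data (f, g)
    and (Pf, PGg) respectively. Then
    2μ‖ε(ũ-u)‖² + (1/λ)‖p̃-p‖²
      = (Pf - f, j(ũ-u) - P j(ũ-u)) + (PGg - g, γ(ũ-u) - PG γ(ũ-u)). -/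
theorem oscillation_identity
    {V W Q L G : Type*} [AddCommGroup V] [Module ℝ V]
    [NormedAddCommGroup W] [InnerProductSpace ℝ W]
    [NormedAddCommGroup Q] [InnerProductSpace ℝ Q]
    [NormedAddCommGroup L] [InnerProductSpace ℝ L]
    [NormedAddCommGroup G] [InnerProductSpace ℝ G]
    (μ lam : ℝ) (hμ : 0 < μ) (hlam : 0 < lam)
    (eps : V →ₗ[ℝ] W) (dv : V →ₗ[ℝ] Q) (j : V →ₗ[ℝ] L) (γ : V →ₗ[ℝ] G)
    (P : L →ₗ[ℝ] L) (PG : G →ₗ[ℝ] G)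
    (hP : ∀ x y : L, ⟪P x - x, P y⟫ = 0)
    (hPG : ∀ x y : G, ⟪PG x - x, PG y⟫ = 0)
    (f : L) (g : G) (u ut : V) (p pt : Q)
    (h1 : ∀ v : V, 2 * μ * ⟪eps u, eps v⟫ + ⟪p, dv v⟫ = ⟪f, j v⟫ + ⟪g, γ v⟫)
    (h2 : ∀ q : Q, ⟪dv u, q⟫ - (1 / lam) * ⟪p, q⟫ = 0)
    (h1t : ∀ v : V, 2 * μ * ⟪eps ut, eps v⟫ + ⟪pt, dv v⟫
      = ⟪P f, j v⟫ + ⟪PG g, γ v⟫)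
    (h2t : ∀ q : Q, ⟪dv ut, q⟫ - (1 / lam) * ⟪pt, q⟫ = 0) :
    2 * μ * ‖eps (ut - u)‖ ^ 2 + (1 / lam) * ‖pt - p‖ ^ 2 =
      ⟪P f - f, j (ut - u) - P (j (ut - u))⟫ +
      ⟪PG g - g, γ (ut - u) - PG (γ (ut - u))⟫ :=
  oscillation_identity_general μ lam eps dv j γ P PG hP hPG f g u ut p pt h1 h2 h1t h2t
end

section
/- Suppose the correction χ ∈ Ξ (a Hilbert space) satisfies the KKT system (∇⊥χ, ∇⊥ξ) - (div ξ, ν) = 0 for all ξ ∈ Ξ and the constraint (div χ, ρ) = (as σ_h^R, ρJ) for all ρ ∈ Z, for some multiplier ν ∈ Z, and suppose the stability bound ‖ν‖ ≤ (C²/√2)‖as σ_h^R‖ holds. Then ‖∇⊥χ‖ ≤ C‖as σ_h^R‖, and if moreover σ is a symmetric matrix field (as σ = 0) with the pointwise bound |as(σ - σ_h^R)| ≤ |σ - σ_h^R|, then ‖∇⊥χ‖ ≤ C‖σ - σ_h^R‖. -/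
/-!
Testing the first KKT equation with `ξ = χ` and the constraint with `ρ = ν` gives
`‖∇⊥χ‖² = (as σ_h^R, νJ) ≤ √2 ‖as σ_h^R‖ ‖ν‖`, which the stability bound turns into
`C² ‖as σ_h^R‖²`. When `as σ = 0`, `as σ_h^R = -as (σ - σ_h^R)`, so the pointwise bound applies.
-/

open RealInnerProductSpace

section SaddlePoint

variable {X Z H : Type*} [NormedAddCommGroup Z] [InnerProductSpace ℝ Z]
  [NormedAddCommGroup H] [InnerProductSpace ℝ H]

theorem norm_sq_eq_inner_of_kkt (curl : X → H) (dv : X → Z) (Jmap : Z → H) (g : H)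
    (χ : X) (ν : Z) (hKKT : ∀ ξ, ⟪curl χ, curl ξ⟫ - ⟪dv ξ, ν⟫ = 0)
    (hconstraint : ∀ ρ, ⟪dv χ, ρ⟫ = ⟪g, Jmap ρ⟫) :
    ‖curl χ‖ ^ 2 = ⟪g, Jmap ν⟫ := by
  rw [← real_inner_self_eq_norm_sq, ← hconstraint, ← sub_eq_zero]
  exact hKKT χ

theorem real_inner_le_sq_of_norm_le {g w : H} {C : ℝ} (h : ‖w‖ ≤ C ^ 2 * ‖g‖) :
    ⟪g, w⟫ ≤ (C * ‖g‖) ^ 2 :=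
  calc ⟪g, w⟫ ≤ ‖g‖ * ‖w‖ := real_inner_le_norm g w
    _ ≤ ‖g‖ * (C ^ 2 * ‖g‖) := by gcongr
    _ = (C * ‖g‖) ^ 2 := by ring

end SaddlePoint

theorem norm_map_sub_of_map_eq_zero {𝓕 E F : Type*} [AddGroup E] [SeminormedAddGroup F]
    [FunLike 𝓕 E F] [AddMonoidHomClass 𝓕 E F] (f : 𝓕) {x y : E} (hx : f x = 0) :
    ‖f (x - y)‖ = ‖f y‖ := by
  rw [map_sub, hx, zero_sub, norm_neg]

/-- bound on the symmetrizing correction (Proposition 5.1). Here `curl χ`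
    stands for ∇⊥χ, `dv` for the divergence, `Jmap ρ` for ρJ (so ‖Jmap ρ‖ = √2 ‖ρ‖),
    and `as` for the anti-symmetric part operator on the stress space H. If χ solves the
    KKT system with multiplier ν satisfying the stability bound
    ‖ν‖ ≤ (C²/√2)‖as σ_h^R‖, then ‖∇⊥χ‖ ≤ C‖as σ_h^R‖; moreover if σ is symmetric
    (as σ = 0) and the pointwise bound gives ‖as(σ - σ_h^R)‖ ≤ ‖σ - σ_h^R‖, then
    ‖∇⊥χ‖ ≤ C‖σ - σ_h^R‖. -/
theorem correction_bound
    {Ξ Z H : Type*}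
    [NormedAddCommGroup Ξ] [InnerProductSpace ℝ Ξ]
    [NormedAddCommGroup Z] [InnerProductSpace ℝ Z]
    [NormedAddCommGroup H] [InnerProductSpace ℝ H]
    (curl : Ξ →ₗ[ℝ] H) (dv : Ξ →ₗ[ℝ] Z) (Jmap : Z →ₗ[ℝ] H)
    (hJ : ∀ ρ : Z, ‖Jmap ρ‖ = Real.sqrt 2 * ‖ρ‖)
    (as : H →ₗ[ℝ] H) (σ σR : H) (χ : Ξ) (ν : Z) (C : ℝ) (hC : 0 ≤ C)
    (hKKT : ∀ ξ : Ξ, ⟪curl χ, curl ξ⟫ - ⟪dv ξ, ν⟫ = 0)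
    (hconstraint : ∀ ρ : Z, ⟪dv χ, ρ⟫ = ⟪as σR, Jmap ρ⟫)
    (hstab : ‖ν‖ ≤ (C ^ 2 / Real.sqrt 2) * ‖as σR‖) :
    ‖curl χ‖ ≤ C * ‖as σR‖ ∧
    (as σ = 0 → ‖as (σ - σR)‖ ≤ ‖σ - σR‖ → ‖curl χ‖ ≤ C * ‖σ - σR‖) := by
  have hJν : ‖Jmap ν‖ ≤ C ^ 2 * ‖as σR‖ := by
    rw [hJ, mul_comm, ← le_div_iff₀ (by positivity), ← div_mul_eq_mul_div]
    exact hstab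
  have hbound : ‖curl χ‖ ≤ C * ‖as σR‖ := by
    refine (pow_le_pow_iff_left₀ (norm_nonneg _) (by positivity) two_ne_zero).1 ?_
    rw [norm_sq_eq_inner_of_kkt curl dv Jmap (as σR) χ ν hKKT hconstraint]
    exact real_inner_le_sq_of_norm_le hJν
  refine ⟨hbound, fun hsym hpointwise => ?_⟩
  calc ‖curl χ‖ ≤ C * ‖as σR‖ := hbound
    _ = C * ‖as (σ - σR)‖ := by rw [norm_map_sub_of_map_eq_zero as hsym]
    _ ≤ C * ‖σ - σR‖ := by gcongr
end

section
/- If σ_h^S is an L² matrix field whose anti-symmetric part has vanishing moment against J on each element T ((as σ_h^S, J)_{L²(T)} = 0 for all T), and if on each T the local Korn inequality inf_{ρ ∈ RM(T)} ‖∇(w - ρ)‖_{L²(T)} ≤ C'_{K,T} ‖ε(w)‖_{L²(T)} holds for w = u - u_h^C ∈ H¹(T)², then (as σ_h^S, ∇(u - u_h^C))_h ≤ C'_K ‖as σ_h^S‖ ‖ε(u - u_h^C)‖_h with C'_K = max_T C'_{K,T}. -/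
open RealInnerProductSpace

/- On each element `as σ` is orthogonal to every rotation `α • J`, so its pairing with `∇w` equals its
pairing with `∇w - α • J`; Cauchy–Schwarz and the local Korn inequality bound this, and the discrete
Cauchy–Schwarz inequality sums the local bounds. -/

theorem real_inner_le_norm_mul_iInf_norm_sub {H : Type*} [NormedAddCommGroup H]
    [InnerProductSpace ℝ H] {β : Type*} [Nonempty β] {a : H} (g : H) {ρ : β → H}
    (horth : ∀ b, ⟪a, ρ b⟫ = 0) :
    ⟪a, g⟫ ≤ ‖a‖ * ⨅ b, ‖g - ρ b‖ := by
  rw [Real.mul_iInf_of_nonneg (norm_nonneg a)]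
  refine le_ciInf fun b => ?_
  calc ⟪a, g⟫ = ⟪a, g - ρ b⟫ := by rw [inner_sub_right, horth b, sub_zero]
    _ ≤ ‖a‖ * ‖g - ρ b‖ := real_inner_le_norm _ _

/-- asymmetry pairing bound via local Korn inequalities. On each element t
    the moment of `asS t` against the rotation `J t` vanishes, and the local Korn
    inequality inf_{α∈ℝ} ‖∇w - α·J‖ ≤ C'_K ‖ε(w)‖ holds; then
    (as σ_h^S, ∇(u - u_h^C))_h ≤ C'_K ‖as σ_h^S‖ ‖ε(u - u_h^C)‖_h. -/
theorem asymmetry_korn_bound {H : Type*} [NormedAddCommGroup H] [InnerProductSpace ℝ H]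
    {ι : Type*} (s : Finset ι) (asS gradw epsw J : ι → H) (CK : ℝ) (hCK : 0 ≤ CK)
    (horth : ∀ t ∈ s, ⟪asS t, J t⟫ = 0)
    (hKorn : ∀ t ∈ s, (⨅ α : ℝ, ‖gradw t - α • J t‖) ≤ CK * ‖epsw t‖) :
    ∑ t ∈ s, ⟪asS t, gradw t⟫ ≤
      CK * Real.sqrt (∑ t ∈ s, ‖asS t‖ ^ 2) * Real.sqrt (∑ t ∈ s, ‖epsw t‖ ^ 2) := by
  have hlocal : ∀ t ∈ s, ⟪asS t, gradw t⟫ ≤ CK * (‖asS t‖ * ‖epsw t‖) := fun t ht =>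
    calc ⟪asS t, gradw t⟫ ≤ ‖asS t‖ * ⨅ α : ℝ, ‖gradw t - α • J t‖ :=
          real_inner_le_norm_mul_iInf_norm_sub _ fun α => by
            rw [inner_smul_right, horth t ht, mul_zero]
      _ ≤ ‖asS t‖ * (CK * ‖epsw t‖) := by gcongr; exact hKorn t ht
      _ = CK * (‖asS t‖ * ‖epsw t‖) := by ring
  calc ∑ t ∈ s, ⟪asS t, gradw t⟫ ≤ CK * ∑ t ∈ s, ‖asS t‖ * ‖epsw t‖ := by
        rw [Finset.mul_sum]; exact Finset.sum_le_sum hlocal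
    _ ≤ CK * (Real.sqrt (∑ t ∈ s, ‖asS t‖ ^ 2) * Real.sqrt (∑ t ∈ s, ‖epsw t‖ ^ 2)) := by
        gcongr; exact Real.sum_mul_le_sqrt_mul_sqrt _ _ _
    _ = _ := (mul_assoc _ _ _).symm
end
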